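/- arXiv:1707.03947 — 2 statements merged into one kernel-verified Lean document; each statement's English description precedes it below -/
import Mathlib

section
/- The canonically immune Turing degrees are cofinal in the Turing degrees: for every set A ⊆ ℕ there exists a canonically immune set R with A Turing reducible to R. -/
/-- The `e`-th computably enumerable set. -/
def WSet (e : ℕ) : Set ℕ := {n | ((Denumerable.ofNat Nat.Partrec.Code e).eval n).Dom}

/-- A canonical numbering: a computable surjection onto the finite subsets of `ℕ`. -/
def CanonicalNumbering (D : ℕ → Finset ℕ) : Prop := Computable D ∧ Function.Surjective D

/-- `R` is canonically immune with modulus of immunity `h`. -/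
def CanonImmuneMod (R : Set ℕ) (h : ℕ → ℕ) : Prop :=
  R.Infinite ∧ ∀ D : ℕ → Finset ℕ, CanonicalNumbering D →
    ∀ᶠ i in Filter.atTop, ↑(D i) ⊆ R → (D i).card ≤ h i

/-- `R` is canonically immune. -/
def CanonicallyImmune (R : Set ℕ) : Prop :=
  ∃ h : ℕ → ℕ, Computable h ∧ CanonImmuneMod R h

/-- `R` is Δ⁰₂ (limit computable). -/
def Delta02 (R : Set ℕ) : Prop :=
  ∃ f : ℕ → ℕ → Bool, Computable₂ f ∧
    ∀ n, ∀ᶠ s in Filter.atTop, (f s n = true ↔ n ∈ R)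

/-- Partial functions recursive in an oracle `O : ℕ → ℕ`. -/
inductive RecursiveInOracle (O : ℕ → ℕ) : (ℕ →. ℕ) → Prop
  | zero : RecursiveInOracle O fun _ => 0
  | succ : RecursiveInOracle O fun n => Part.some (n + 1)
  | left : RecursiveInOracle O fun n => Part.some (Nat.unpair n).1
  | right : RecursiveInOracle O fun n => Part.some (Nat.unpair n).2
  | oracle : RecursiveInOracle O fun n => Part.some (O n)
  | pair {f g} : RecursiveInOracle O f → RecursiveInOracle O g →
      RecursiveInOracle O fun n => Nat.pair <$> f n <*> g n
  | comp {f g} : RecursiveInOracle O f → RecursiveInOracle O g →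
      RecursiveInOracle O fun n => g n >>= f
  | prec {f g} : RecursiveInOracle O f → RecursiveInOracle O g →
      RecursiveInOracle O (Nat.unpaired fun a n =>
        n.rec (f a) fun y IH => do let i ← IH; g (Nat.pair a (Nat.pair y i)))
  | rfind {f} : RecursiveInOracle O f →
      RecursiveInOracle O fun a => Nat.rfind fun n => (fun m => m = 0) <$> f (Nat.pair a n)

open Classical in
/-- Characteristic function of a set of naturals. -/
noncomputable def chi (A : Set ℕ) : ℕ → ℕ := fun n => if n ∈ A then 1 else 0

/-- `A` is Turing reducible to the oracle `O`. -/
def TuringReducibleTo (A : Set ℕ) (O : ℕ → ℕ) : Prop :=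
  RecursiveInOracle O fun n => Part.some (chi A n)

/-- `A` is Turing reducible to the set `B`. -/
def TuringReducibleSet (A B : Set ℕ) : Prop := TuringReducibleTo A (chi B)

/-- The oracle given by a real `G ∈ 2^ω`. -/
def oracleOf (G : ℕ → Bool) : ℕ → ℕ := fun n => cond (G n) 1 0

/-- `S` is computably enumerable relative to the real `G`. -/
def CEIn (G : ℕ → Bool) (S : Set ℕ) : Prop :=
  ∃ f : ℕ →. ℕ, RecursiveInOracle (oracleOf G) f ∧ S = {n | (f n).Dom}

/-- The length-`n` initial segment of a real. -/
def initSeg (G : ℕ → Bool) (n : ℕ) : List Bool := List.ofFn fun i : Fin n => G i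

/-- A Σ⁰₂ set of binary strings. -/
def Sigma02Strings (X : Set (List Bool)) : Prop :=
  ∃ p : List Bool → ℕ → ℕ → Bool,
    (Computable fun x : List Bool × ℕ × ℕ => p x.1 x.2.1 x.2.2) ∧
    X = {σ | ∃ m, ∀ k, p σ m k = true}

/-- A (Cohen) 2-generic real. -/
def TwoGeneric (G : ℕ → Bool) : Prop :=
  ∀ X : Set (List Bool), Sigma02Strings X →
    (∃ n, initSeg G n ∈ X) ∨ (∃ n, ∀ τ, initSeg G n <+: τ → τ ∉ X)

/-- A computably enumerable set of binary strings. -/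
def CEStrings (X : Set (List Bool)) : Prop :=
  ∃ p : List Bool → ℕ → Bool, Computable₂ p ∧ X = {σ | ∃ s, p σ s = true}

/-- A dense set of binary strings. -/
def DenseStrings (X : Set (List Bool)) : Prop := ∀ σ, ∃ τ, σ <+: τ ∧ τ ∈ X

/-- A weakly 1-generic real. -/
def Weakly1Generic (G : ℕ → Bool) : Prop :=
  ∀ X : Set (List Bool), CEStrings X → DenseStrings X → ∃ n, initSeg G n ∈ X

/-- A hyperimmune set: infinite and its increasing enumeration (principal function)
is not dominated by any computable function. -/
def Hyperimmune (R : Set ℕ) : Prop :=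
  R.Infinite ∧ ∀ f : ℕ → ℕ, Computable f →
    ∃ᶠ n in Filter.atTop, f n < Nat.nth (· ∈ R) n

/-- A (computable) Mathias condition `[a, A]`. -/
structure MathiasCond where
  a : Finset ℕ
  A : Set ℕ
  infinite : A.Infinite
  comp : ComputablePred (· ∈ A)
  lt : ∀ x ∈ a, ∀ y ∈ A, x < y

/-- `c'` extends `c` as a Mathias condition. -/
def MathiasCond.Extends (c' c : MathiasCond) : Prop :=
  c.a ⊆ c'.a ∧ (↑c'.a \ ↑c.a : Set ℕ) ⊆ c.A ∧ c'.A ⊆ c.A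

/-- A dense family of Mathias conditions. -/
def MathiasDense (𝒳 : Set MathiasCond) : Prop := ∀ c, ∃ c' ∈ 𝒳, c'.Extends c

/-- `R ∈ [a, A]`. -/
def MathiasCond.Mem (c : MathiasCond) (R : Set ℕ) : Prop :=
  ↑c.a ⊆ R ∧ R ⊆ ↑c.a ∪ c.A

/-- `R` meets the family `𝒳` of Mathias conditions. -/
def Meets (R : Set ℕ) (𝒳 : Set MathiasCond) : Prop := ∃ c ∈ 𝒳, c.Mem R

/-- The arithmetical sets of naturals: closure of the computable sets under
complementation and projection. -/
inductive Arithmetical : Set ℕ → Prop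
  | of_computable {S : Set ℕ} : ComputablePred (· ∈ S) → Arithmetical S
  | compl {S : Set ℕ} : Arithmetical S → Arithmetical {n | n ∉ S}
  | proj {S : Set ℕ} : Arithmetical S → Arithmetical {n | ∃ m, Nat.pair n m ∈ S}

open Classical in
/-- `n` codes the Mathias condition `c`: its first component is the canonical code of the
finite set and its second component is an index for the characteristic function of `A`. -/
noncomputable def CondCode (n : ℕ) (c : MathiasCond) : Prop :=
  n.unpair.1 = Encodable.encode c.a ∧
  ∀ x, ((Denumerable.ofNat Nat.Partrec.Code n.unpair.2)).eval x = Part.some (if x ∈ c.A then 1 else 0)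

/-- The set of codes of members of `𝒳`. -/
def CodesOf (𝒳 : Set MathiasCond) : Set ℕ := {n | ∃ c ∈ 𝒳, CondCode n c}

/-- A Mathias generic real: one meeting every arithmetically definable dense family
of Mathias conditions. -/
def MathiasGeneric (R : Set ℕ) : Prop :=
  ∀ 𝒳 : Set MathiasCond, Arithmetical (CodesOf 𝒳) → MathiasDense 𝒳 → Meets R 𝒳

/-- A Σ⁰₃ set of naturals. -/
def Sigma03Set (S : Set ℕ) : Prop :=
  ∃ p : ℕ → ℕ → ℕ → ℕ → Bool,
    (Computable fun x : ℕ × ℕ × ℕ × ℕ => p x.1 x.2.1 x.2.2.1 x.2.2.2) ∧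
    S = {n | ∃ a, ∀ b, ∃ c, p n a b c = true}

/-- A Mathias 3-generic real. -/
def Mathias3Generic (R : Set ℕ) : Prop :=
  ∀ 𝒳 : Set MathiasCond, Sigma03Set (CodesOf 𝒳) → MathiasDense 𝒳 → Meets R 𝒳

/-- An effectively immune set. -/
def EffectivelyImmune (Q : Set ℕ) : Prop :=
  Q.Infinite ∧ ∃ h : ℕ → ℕ, Computable h ∧
    ∀ e, WSet e ⊆ Q → (WSet e).Finite ∧ (WSet e).ncard ≤ h e

/-- The basic cylinder of 2^ω determined by the finite string `σ`. -/
def Cyl (σ : List Bool) : Set (ℕ → Bool) := {G | ∀ i : Fin σ.length, G i = σ.get i}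

/-- The open subset of 2^ω generated by a set of strings. -/
def OpenFrom (P : Set (List Bool)) : Set (ℕ → Bool) := ⋃ σ ∈ P, Cyl σ

/-- A uniformly c.e. sequence of sets of strings. -/
def UniformlyCE (P : ℕ → Set (List Bool)) : Prop :=
  ∃ f : ℕ → List Bool → ℕ → Bool,
    (Computable fun x : ℕ × List Bool × ℕ => f x.1 x.2.1 x.2.2) ∧
    ∀ n σ, σ ∈ P n ↔ ∃ s, f n σ s = true

/-- `μ` is the uniform (fair-coin) product measure on 2^ω: every basic cylinder
determined by a string of length `l` has measure `2⁻ˡ`. -/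
def IsFairCoin (μ : MeasureTheory.Measure (ℕ → Bool)) : Prop :=
  ∀ σ : List Bool, μ (Cyl σ) = (2 ^ σ.length : ENNReal)⁻¹

/-- A Schnorr test with respect to the measure `μ`: uniformly c.e. open sets with
uniformly computable measures bounded by `2^{-n}`. -/
def SchnorrTest (μ : MeasureTheory.Measure (ℕ → Bool)) (U : ℕ → Set (ℕ → Bool)) : Prop :=
  (∃ P : ℕ → Set (List Bool), UniformlyCE P ∧ ∀ n, U n = OpenFrom (P n)) ∧
  (∃ q : ℕ → ℕ → ℚ, Computable₂ q ∧
    ∀ n k, |(q n k : ℝ) - (μ (U n)).toReal| ≤ (2 : ℝ)⁻¹ ^ k) ∧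
  ∀ n, μ (U n) ≤ (2 ^ n : ENNReal)⁻¹

/-- A Schnorr random real (with respect to the fair-coin measure `μ`). -/
def SchnorrRandom (μ : MeasureTheory.Measure (ℕ → Bool)) (G : ℕ → Bool) : Prop :=
  ∀ U : ℕ → Set (ℕ → Bool), SchnorrTest μ U → G ∉ ⋂ n, U n

open Classical in
/-- The characteristic sequence of a set of naturals, as a point of 2^ω. -/
noncomputable def chiB (R : Set ℕ) : ℕ → Bool := fun n => decide (n ∈ R)

/-!
Fix a strictly increasing `B` that eventually dominates every computable function (sum the
values of the first `n` partial computable functions on the first `n` arguments) and let `R` be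
the range of `r n = 2 B(n) + χ_A(n)`. The canonical index of a finite set bounds its elements,
so along any canonical numbering `D` eventually all elements of `D i` lie below `B i ≤ r i`;
then `D i ⊆ R` forces `D i ⊆ {r 0, …, r (i-1)}`, and `h = id` is a modulus of canonical
immunity. Conversely `R` computes its principal function `r` by iterated search for its next
element, and `χ_A(n) = r(n) mod 2`.
-/

open Filter Encodable Denumerable

theorem Denumerable.lt_add_encode_of_mem_raise' :
    ∀ {l : List ℕ} {n x : ℕ}, x ∈ raise' l n → x < n + encode l
  | [], _, _, hx => by simp [raise'] at hx
  | m :: l, n, x, hx => by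
    have hpair := Nat.add_le_pair m (encode l)
    simp only [raise', List.mem_cons] at hx
    rw [encode_list_cons, encode_nat]
    rcases hx with rfl | hx
    · omega
    · have := lt_add_encode_of_mem_raise' hx
      omega

theorem Computable.exists_bound_of_finset {D : ℕ → Finset ℕ} (hD : Computable D) :
    ∃ g : ℕ → ℕ, Computable g ∧ ∀ i, ∀ x ∈ D i, x < g i := by
  refine ⟨_, Computable.encode.comp hD, fun i x hx => ?_⟩
  -- `Primcodable (Finset ℕ)` is `Denumerable.finset`, which decodes an index via `raise'`.
  rw [← ofNat_encode (D i)] at hx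
  obtain ⟨y, hy, rfl⟩ := Finset.mem_map.1 hx
  exact (lt_add_encode_of_mem_raise' hy).trans_eq (by simp)

open Classical in
noncomputable def codeValue (e n : ℕ) : ℕ :=
  ((ofNat Nat.Partrec.Code e).eval n).getOrElse 0

noncomputable def dominator (n : ℕ) : ℕ :=
  n + 1 + ∑ e ∈ Finset.range (n + 1), ∑ m ∈ Finset.range (n + 1), codeValue e m

theorem dominator_strictMono : StrictMono dominator := by
  refine strictMono_nat_of_lt_succ fun n => ?_
  have hsum : ∑ e ∈ Finset.range (n + 1), ∑ m ∈ Finset.range (n + 1), codeValue e m ≤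
      ∑ e ∈ Finset.range (n + 1 + 1), ∑ m ∈ Finset.range (n + 1 + 1), codeValue e m :=
    calc _ ≤ ∑ e ∈ Finset.range (n + 1), ∑ m ∈ Finset.range (n + 1 + 1), codeValue e m :=
          Finset.sum_le_sum fun _ _ => Finset.sum_le_sum_of_subset (by simp)
      _ ≤ _ := Finset.sum_le_sum_of_subset (by simp)
  simp only [dominator]
  omega

theorem eventually_lt_dominator {g : ℕ → ℕ} (hg : Computable g) :
    ∀ᶠ n in atTop, g n < dominator n := by
  obtain ⟨c, hc⟩ := Nat.Partrec.Code.exists_code.1 (Partrec.nat_iff.1 hg)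
  filter_upwards [eventually_ge_atTop (encode c)] with n hn
  have hvalue : codeValue (encode c) n = g n := by
    simp [codeValue, hc]
  have hle : codeValue (encode c) n ≤
      ∑ e ∈ Finset.range (n + 1), ∑ m ∈ Finset.range (n + 1), codeValue e m :=
    calc _ ≤ ∑ m ∈ Finset.range (n + 1), codeValue (encode c) m :=
          Finset.single_le_sum (fun _ _ => Nat.zero_le _) (by simp)
      _ ≤ _ := Finset.single_le_sum (f := fun e => ∑ m ∈ Finset.range (n + 1), codeValue e m)
          (fun _ _ => Nat.zero_le _) (by simp; omega)
  simp only [dominator]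
  omega

theorem StrictMono.exists_mem_ge_apply_of_lt_card {r : ℕ → ℕ} (hr : StrictMono r)
    {s : Finset ℕ} (hs : ↑s ⊆ Set.range r) {i : ℕ} (hi : i < s.card) : ∃ x ∈ s, r i ≤ x := by
  by_contra! h
  have hsub : s ⊆ (Finset.range i).image r := fun x hx => by
    obtain ⟨m, rfl⟩ := hs hx
    exact Finset.mem_image_of_mem r (Finset.mem_range.2 (hr.lt_iff_lt.1 (h _ hx)))
  have := (Finset.card_le_card hsub).trans Finset.card_image_le
  rw [Finset.card_range] at this
  omega

theorem canonImmuneMod_range_id {r : ℕ → ℕ} (hr : StrictMono r)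
    (hdom : ∀ g : ℕ → ℕ, Computable g → ∀ᶠ n in atTop, g n < r n) :
    CanonImmuneMod (Set.range r) id := by
  refine ⟨Set.infinite_range_of_injective hr.injective, fun D hD => ?_⟩
  obtain ⟨g, hg, hbound⟩ := hD.1.exists_bound_of_finset
  filter_upwards [hdom g hg] with i hi hsub
  by_contra! hcard
  obtain ⟨x, hx, hix⟩ := hr.exists_mem_ge_apply_of_lt_card hsub hcard
  exact (hbound i x hx).not_ge (hi.le.trans hix)

theorem RecursiveInOracle.of_partrec {O : ℕ → ℕ} {f : ℕ →. ℕ} (hf : Nat.Partrec f) :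
    RecursiveInOracle O f := by
  induction hf with
  | zero => exact .zero
  | succ => exact .succ
  | left => exact .left
  | right => exact .right
  | pair _ _ ihf ihg => exact .pair ihf ihg
  | comp _ _ ihf ihg => exact .comp ihf ihg
  | prec _ _ ihf ihg => exact .prec ihf ihg
  | rfind _ ihf => exact .rfind ihf

def ComputableInOracle (O f : ℕ → ℕ) : Prop :=
  RecursiveInOracle O fun n => Part.some (f n)

namespace ComputableInOracle

variable {O f g : ℕ → ℕ}

theorem of_computable (hf : Computable f) : ComputableInOracle O f :=
  RecursiveInOracle.of_partrec (Partrec.nat_iff.1 hf)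

theorem oracle : ComputableInOracle O O :=
  RecursiveInOracle.oracle

theorem comp (hg : ComputableInOracle O g) (hf : ComputableInOracle O f) :
    ComputableInOracle O fun n => g (f n) := by
  simpa [ComputableInOracle] using RecursiveInOracle.comp hg hf

theorem pair (hf : ComputableInOracle O f) (hg : ComputableInOracle O g) :
    ComputableInOracle O fun n => Nat.pair (f n) (g n) := by
  simpa [ComputableInOracle, Seq.seq] using RecursiveInOracle.pair hf hg

theorem iterate (hf : ComputableInOracle O f) (a : ℕ) :
    ComputableInOracle O fun n => f^[n] a := by
  have hstep : ComputableInOracle O fun z => f z.unpair.2.unpair.2 :=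
    hf.comp (of_computable (Computable.snd.comp (Computable.unpair.comp
      (Computable.snd.comp Computable.unpair))))
  have hrec : ComputableInOracle O fun z => f^[z.unpair.2] a := by
    refine (congrArg (RecursiveInOracle O) (funext fun z => ?_)).mpr
      (RecursiveInOracle.prec (of_computable (Computable.const a)) hstep)
    simp only [Nat.unpaired]
    induction z.unpair.2 with
    | zero => rfl
    | succ n ih =>
      simp only [Nat.unpair_pair, Part.bind_eq_bind] at ih ⊢
      rw [← ih, Part.bind_some, Function.iterate_succ_apply']
  simpa using hrec.comp
    (of_computable (Primrec₂.natPair.comp (Primrec.const 0) Primrec.id).to_comp)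

theorem find {p : ℕ → ℕ → Prop} [∀ a, DecidablePred (p a)] (hf : ComputableInOracle O f)
    (hfp : ∀ a n, f (Nat.pair a n) = 0 ↔ p a n) (H : ∀ a, ∃ n, p a n) :
    ComputableInOracle O fun a => Nat.find (H a) := by
  refine (congrArg (RecursiveInOracle O) (funext fun a => ?_)).mpr (RecursiveInOracle.rfind hf)
  refine (Part.eq_some_iff.2 (Nat.mem_rfind.2 ⟨?_, fun hm => ?_⟩)).symm
  · simpa [hfp] using Nat.find_spec (H a)
  · simpa [hfp] using Nat.find_min (H a) hm

end ComputableInOracle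

theorem Nat.nth_add_one_eq_add_find {p : ℕ → Prop} [DecidablePred p]
    (hp : (Set.ofPred p).Infinite) (n : ℕ) (h : ∃ m, p (nth p n + 1 + m)) :
    nth p (n + 1) = nth p n + 1 + Nat.find h := by
  have hlt : nth p n < nth p (n + 1) := (nth_lt_nth hp).2 (Nat.lt_add_one n)
  refine le_antisymm (not_lt.1 fun hgt => ?_) ?_
  · have := le_nth_of_lt_nth_succ hgt (Nat.find_spec h)
    omega
  · have := Nat.find_min' h (m := nth p (n + 1) - (nth p n + 1)) (by
      rw [Nat.add_sub_cancel' hlt]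
      exact nth_mem_of_infinite hp _)
    omega

theorem computableInOracle_nth {R : Set ℕ} (hR : R.Infinite) :
    ComputableInOracle (chi R) (Nat.nth (· ∈ R)) := by
  classical
  have H : ∀ i, ∃ m, i + 1 + m ∈ R := fun i => by
    obtain ⟨x, hx, hix⟩ := hR.exists_gt i
    exact ⟨x - (i + 1), by rwa [Nat.add_sub_cancel' hix]⟩
  have hshift : Computable fun z : ℕ => z.unpair.1 + 1 + z.unpair.2 :=
    (Primrec.nat_add.comp (Primrec.nat_add.comp (Primrec.fst.comp Primrec.unpair)
      (Primrec.const 1)) (Primrec.snd.comp Primrec.unpair)).to_comp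
  have hgap : ComputableInOracle (chi R) fun z => 1 - chi R (z.unpair.1 + 1 + z.unpair.2) :=
    (ComputableInOracle.of_computable
      (Primrec.nat_sub.comp (Primrec.const 1) Primrec.id).to_comp).comp
      (ComputableInOracle.oracle.comp (.of_computable hshift))
  have hnext : ComputableInOracle (chi R) fun i => i + 1 + Nat.find (H i) := by
    have := (ComputableInOracle.of_computable Computable.id).pair
      (hgap.find (fun a n => by by_cases h : a + 1 + n ∈ R <;> simp [chi, h]) H)
    simpa using (ComputableInOracle.of_computable hshift).comp this
  have hnth : Nat.nth (· ∈ R) =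
      fun n => (fun i => i + 1 + Nat.find (H i))^[n] (Nat.nth (· ∈ R) 0) := by
    funext n
    induction n with
    | zero => rfl
    | succ n ih =>
      rw [Function.iterate_succ_apply', ← ih, Nat.nth_add_one_eq_add_find (p := (· ∈ R)) hR]
  rw [hnth]
  exact hnext.iterate _

theorem StrictMono.nth_mem_range_eq {r : ℕ → ℕ} (hr : StrictMono r) :
    Nat.nth (· ∈ Set.range r) = r := by
  funext n
  rw [← Nat.nth_comp_of_strictMono hr (fun _ => id)
    fun hfin => absurd hfin (Set.infinite_range_of_injective hr.injective)]
  simp [Nat.nth_of_forall]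

/-- The canonically immune degrees are cofinal in the Turing degrees. -/
theorem canonically_immune_cofinal :
    ∀ A : Set ℕ, ∃ R : Set ℕ, CanonicallyImmune R ∧ TuringReducibleSet A R := by
  intro A
  have hchi : ∀ n, chi A n < 2 := fun n => by unfold chi; split <;> omega
  obtain ⟨r, hr_def⟩ : ∃ r : ℕ → ℕ, ∀ n, r n = 2 * dominator n + chi A n := ⟨_, fun _ => rfl⟩
  have hr : StrictMono r := strictMono_nat_of_lt_succ fun n => by
    have := dominator_strictMono (Nat.lt_add_one n)
    have := hchi n
    rw [hr_def, hr_def]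
    omega
  refine ⟨Set.range r, ⟨id, Computable.id, canonImmuneMod_range_id hr fun g hg => ?_⟩, ?_⟩
  · filter_upwards [eventually_lt_dominator hg] with n hn
    rw [hr_def]
    omega
  · have hmod := (ComputableInOracle.of_computable
      (Primrec.nat_mod.comp Primrec.id (Primrec.const 2)).to_comp).comp
      (computableInOracle_nth (Set.infinite_range_of_injective hr.injective))
    rw [hr.nth_mem_range_eq] at hmod
    show ComputableInOracle _ (chi A)
    convert hmod using 1
    funext n
    have := hchi n
    rw [id, hr_def]
    omega
end

section
/- There exists a set R ⊆ ℕ which is hyperimmune but not canonically immune. -/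
/-!
`R` is built in stages: stage `j` first leaves out a gap `[t, t + φ t]` and then takes in an
interval `[n, n + φ n]`, where `φ` runs (noncomputably) through every computable function
infinitely often. Long gaps at arbitrarily large `t` make the principal function of `R` escape
every computable bound; since the index `count R t` of the first element after the gap is only
known to be at most `t`, the bound is first replaced by its running sum. So `R` is hyperimmune.
Long intervals at arbitrarily large `n` defeat every computable modulus `h`: in the canonical
numbering whose index `2 n` names `[n, n + h (2 n)]`, infinitely many indices name subsets of
`R` with more than `h` elements.
-/

open Filter Encodable Denumerable

theorem Computable.exists_enumeration :
    ∃ φ : ℕ → ℕ → ℕ, ∀ f : ℕ → ℕ, Computable f → ∃ e, φ e = f := by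
  classical
  refine ⟨fun e n => ((ofNat Nat.Partrec.Code e).eval n).getOrElse 0, fun f hf => ?_⟩
  obtain ⟨c, hc⟩ := Nat.Partrec.Code.exists_code.1 (Partrec.nat_iff.1 hf.partrec)
  refine ⟨encode c, funext fun n => ?_⟩
  simp only [ofNat_encode, hc]
  exact Part.getOrElse_of_dom _ trivial 0

theorem Computable.sum_range {f : ℕ → ℕ} (hf : Computable f) :
    Computable fun t => ∑ k ∈ Finset.range t, f k := by
  refine (Computable.nat_rec (g := fun _ => 0) (h := fun _ p => p.2 + f p.1) Computable.id
    (Computable.const 0) ?_).of_eq fun t => ?_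
  · exact (Primrec.nat_add.to_comp.comp (Computable.snd.comp Computable.snd)
      (hf.comp (Computable.fst.comp Computable.snd))).to₂
  · induction t with
    | zero => rfl
    | succ t ih => rw [Finset.sum_range_succ, ← ih]; rfl

theorem Denumerable.raise'_replicate_zero (w t : ℕ) :
    raise' (List.replicate w 0) t = List.range' t w := by
  induction w generalizing t with
  | zero => rfl
  | succ w ih => simp [List.replicate_succ, raise', ih, List.range'_succ]

theorem Denumerable.ofNat_encode_cons_replicate (N w : ℕ) :
    ofNat (Finset ℕ) (encode (N :: List.replicate w 0)) = Finset.Icc N (N + w) := by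
  have : ofNat (Finset ℕ) (encode (N :: List.replicate w 0)) =
      Finset.map (eqv ℕ).symm.toEmbedding (raise'Finset (N :: List.replicate w 0) 0) :=
    ofNat_of_decode (by simp [decode, ofNat_encode])
  ext x
  simp only [this, Finset.mem_map_equiv, raise'Finset, raise', raise'_replicate_zero]
  change x ∈ (N + 0) :: List.range' (N + 0 + 1) w ↔ _
  simp only [List.mem_cons, List.mem_range'_1, Finset.mem_Icc]
  omega

theorem Primrec.list_replicate {α : Type*} [Primcodable α] : Primrec₂ (@List.replicate α) :=
  (Primrec.list_map (Primrec.list_range.comp Primrec.fst) (Primrec.snd.comp Primrec.fst).to₂).of_eq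
    fun p => by simp [List.map_const']

theorem Computable.finset_Icc_add : Computable₂ fun N w : ℕ => Finset.Icc N (N + w) := by
  have hcode : Computable₂ fun N w : ℕ => encode (N :: List.replicate w 0) :=
    Computable.encode.comp₂ (Computable.list_cons.comp₂ Computable.fst
      (Primrec.list_replicate.to_comp.comp₂ Computable.snd (Computable.const 0)))
  exact ((Computable.ofNat (Finset ℕ)).comp₂ hcode).of_eq fun p =>
    ofNat_encode_cons_replicate p.1 p.2

theorem hyperimmune_of_frequently_disjoint_Icc {R : Set ℕ} (hR : R.Infinite)
    (h : ∀ g : ℕ → ℕ, Computable g → ∃ᶠ t in atTop, Disjoint (Set.Icc t (t + g t)) R) :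
    Hyperimmune R := by
  classical
  refine ⟨hR, fun f hf => ?_⟩
  let g t := ∑ k ∈ Finset.range (t + 1), f k
  have hg : Computable g := hf.sum_range.comp Computable.succ
  have hcount : Tendsto (Nat.count (· ∈ R)) atTop atTop :=
    (Nat.count_monotone _).tendsto_atTop_atTop fun n =>
      ⟨_, (Nat.count_nth_of_infinite (p := (· ∈ R)) hR n).ge⟩
  refine hcount.frequently_map _ (fun t hgap => ?_) (h g hg)
  set k := Nat.count (· ∈ R) t
  have hfk : f k ≤ g t :=
    Finset.single_le_sum (fun _ _ => Nat.zero_le _)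
      (Finset.mem_range_succ_iff.2 (Nat.count_le _))
  have ht : t ≤ Nat.nth (· ∈ R) k := Nat.le_nth_count (p := (· ∈ R)) hR t
  have hpast : t + g t < Nat.nth (· ∈ R) k := by
    by_contra! hle
    exact hgap.notMem_of_mem_right (Nat.nth_mem_of_infinite hR k) ⟨ht, hle⟩
  omega

theorem not_canonicallyImmune_of_frequently_Icc_subset {R : Set ℕ}
    (h : ∀ g : ℕ → ℕ, Computable g → ∃ᶠ n in atTop, Set.Icc n (n + g n) ⊆ R) :
    ¬ CanonicallyImmune R := by
  rintro ⟨k, hk, -, himm⟩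
  -- the even indices `2 n` name intervals one element too large for the modulus `k`
  let D : ℕ → Finset ℕ := fun i =>
    bif i.bodd then ofNat (Finset ℕ) i.div2 else Finset.Icc i.div2 (i.div2 + k i)
  have hD : CanonicalNumbering D := by
    refine ⟨Computable.cond Computable.nat_bodd
      ((Computable.ofNat _).comp Computable.nat_div2)
      (Computable.finset_Icc_add.comp Computable.nat_div2 hk), fun s => ⟨2 * eqv (Finset ℕ) s + 1, ?_⟩⟩
    simp only [D, Nat.bodd_succ, Nat.bodd_mul, Nat.bodd_zero, Bool.not_false, Bool.not_true,
      Bool.false_and, Nat.div2_succ, Nat.div2_bit0, cond_false, cond_true]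
    exact (eqv (Finset ℕ)).symm_apply_apply s
  have hD_even (n : ℕ) : D (2 * n) = Finset.Icc n (n + k (2 * n)) := by simp [D]
  have htwo : Tendsto (fun n : ℕ => 2 * n) atTop atTop :=
    (strictMono_mul_left_of_pos two_pos).tendsto_atTop
  obtain ⟨n, hsub, hcard⟩ :=
    ((h _ (hk.comp (Primrec.nat_mul.to_comp.comp (Computable.const 2) Computable.id))).and_eventually
      (htwo.eventually (himm D hD))).exists
  rw [hD_even, Finset.coe_Icc, Nat.card_Icc] at hcard
  have := hcard hsub
  omega

namespace GapsAndBlocks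

variable (ψ : ℕ → ℕ → ℕ)

/-- Stage `j` leaves out the gap `[stageStart ψ j, stageStart ψ j + ψ j (stageStart ψ j)]`
and then takes in the block `[blockStart ψ j, blockStart ψ j + ψ j (blockStart ψ j)]`. -/
def stageStart : ℕ → ℕ
  | 0 => 0
  | j + 1 =>
    let b := stageStart j + ψ j (stageStart j) + 1
    b + ψ j b + 1

def blockStart (j : ℕ) : ℕ := stageStart ψ j + ψ j (stageStart ψ j) + 1

def blockSet : Set ℕ := ⋃ j, Set.Icc (blockStart ψ j) (blockStart ψ j + ψ j (blockStart ψ j))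

theorem stageStart_succ (j : ℕ) :
    stageStart ψ (j + 1) = blockStart ψ j + ψ j (blockStart ψ j) + 1 := rfl

theorem strictMono_stageStart : StrictMono (stageStart ψ) :=
  strictMono_nat_of_lt_succ fun j => by rw [stageStart_succ, blockStart]; omega

theorem stageStart_lt_blockStart (j : ℕ) : stageStart ψ j < blockStart ψ j := by
  rw [blockStart]; omega

theorem strictMono_blockStart : StrictMono (blockStart ψ) :=
  strictMono_nat_of_lt_succ fun j => by
    have := stageStart_lt_blockStart ψ (j + 1)
    rw [stageStart_succ] at this
    omega

theorem Icc_blockStart_subset (j : ℕ) :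
    Set.Icc (blockStart ψ j) (blockStart ψ j + ψ j (blockStart ψ j)) ⊆ blockSet ψ :=
  Set.subset_iUnion_of_subset j le_rfl

theorem disjoint_Icc_stageStart (j : ℕ) :
    Disjoint (Set.Icc (stageStart ψ j) (stageStart ψ j + ψ j (stageStart ψ j))) (blockSet ψ) := by
  refine Set.disjoint_left.2 fun x ⟨hjx, hxj⟩ hx => ?_
  obtain ⟨i, hix, hxi⟩ := Set.mem_iUnion.1 hx
  rcases lt_or_ge i j with hij | hji
  · have := (strictMono_stageStart ψ).monotone (Nat.succ_le_of_lt hij)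
    rw [stageStart_succ] at this
    omega
  · have := (strictMono_blockStart ψ).monotone hji
    have hj : blockStart ψ j = stageStart ψ j + ψ j (stageStart ψ j) + 1 := rfl
    omega

theorem infinite_blockSet : (blockSet ψ).Infinite :=
  Set.infinite_of_forall_exists_gt fun j =>
    ⟨blockStart ψ j, Icc_blockStart_subset ψ j ⟨le_rfl, Nat.le_add_right _ _⟩,
      ((strictMono_stageStart ψ).id_le j).trans_lt (stageStart_lt_blockStart ψ j)⟩

variable {ψ}

theorem frequently_disjoint_Icc_blockSet {g : ℕ → ℕ} (hg : ∃ᶠ j in atTop, ψ j = g) :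
    ∃ᶠ t in atTop, Disjoint (Set.Icc t (t + g t)) (blockSet ψ) :=
  (strictMono_stageStart ψ).tendsto_atTop.frequently_map _
    (fun j (hj : ψ j = g) => hj ▸ disjoint_Icc_stageStart ψ j) hg

theorem frequently_Icc_subset_blockSet {g : ℕ → ℕ} (hg : ∃ᶠ j in atTop, ψ j = g) :
    ∃ᶠ n in atTop, Set.Icc n (n + g n) ⊆ blockSet ψ :=
  (tendsto_atTop_mono (fun j => (stageStart_lt_blockStart ψ j).le)
    (strictMono_stageStart ψ).tendsto_atTop).frequently_map _
    (fun j (hj : ψ j = g) => hj ▸ Icc_blockStart_subset ψ j) hg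

end GapsAndBlocks

/-- There is a hyperimmune set which is not canonically immune. -/
theorem exists_hyperimmune_not_canonically_immune :
    ∃ R : Set ℕ, Hyperimmune R ∧ ¬ CanonicallyImmune R := by
  obtain ⟨φ, hφ⟩ := Computable.exists_enumeration
  let ψ : ℕ → ℕ → ℕ := fun j => φ j.unpair.1
  have hψ (g : ℕ → ℕ) (hg : Computable g) : ∃ᶠ j in atTop, ψ j = g := by
    obtain ⟨e, rfl⟩ := hφ g hg
    exact frequently_atTop.2 fun N => ⟨Nat.pair e N, Nat.right_le_pair e N, by simp [ψ]⟩
  exact ⟨GapsAndBlocks.blockSet ψ,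
    hyperimmune_of_frequently_disjoint_Icc (GapsAndBlocks.infinite_blockSet ψ)
      fun g hg => GapsAndBlocks.frequently_disjoint_Icc_blockSet (hψ g hg),
    not_canonicallyImmune_of_frequently_Icc_subset
      fun g hg => GapsAndBlocks.frequently_Icc_subset_blockSet (hψ g hg)⟩
end
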